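/- Drift-plus-penalty expectation bounds (Theorem 1): Suppose E[L(Q(0))] < ∞ and for all t and all histories H(t), Δ(H(t)) + V·E[p(t)|H(t)] ≤ B + V·p* − ε·∑_{k=1}^K |Q_k(t)|, where Δ(H(t)) = E[L(Q(t+1)) − L(Q(t)) | H(t)], with finite constants B, p*, V > 0, ε > 0. If there is a finite constant p_min with E[p(t)] ≥ p_min for all t, then: (i) limsup_{M→∞} (1/M) ∑_{t=0}^{M−1} E[p(t)] ≤ p* + B/V, and (ii) limsup_{M→∞} (1/M) ∑_{t=0}^{M−1} ∑_k E[|Q_k(t)|] ≤ (B + V(p* − p_min))/ε. Moreover, for all M ≥ 1 the non-asymptotic bounds (1/M)∑_{t<M} E[p(t)] ≤ p* + B/V + E[L(Q(0))]/(VM) and (1/M)∑_{t<M}∑_k E[|Q_k(t)|] ≤ (B + V(p* − p_min))/ε + E[L(Q(0))]/(εM) hold. -/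

import Mathlib

open MeasureTheory ProbabilityTheory Filter Topology

/-- The quadratic Lyapunov function `L(q) = (1/2) ∑ₖ wₖ qₖ²`. -/
noncomputable def lyap {K : ℕ} (w : Fin K → ℝ) (q : Fin K → ℝ) : ℝ :=
  (1 / 2) * ∑ k, w k * q k ^ 2

/-- The history σ-algebra `H(t)` generated by `Q(0), ..., Q(t)` and `p(0), ..., p(t-1)`. -/
def hist {Ω : Type*} [MeasurableSpace Ω] {K : ℕ}
    (Q : ℕ → Ω → Fin K → ℝ) (p : ℕ → Ω → ℝ) (t : ℕ) : MeasurableSpace Ω :=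
  (⨆ i ∈ Finset.range (t + 1), MeasurableSpace.comap (Q i) inferInstance) ⊔
    (⨆ i ∈ Finset.range t, MeasurableSpace.comap (p i) inferInstance)

/-! Taking expectations in the drift-plus-penalty condition (the tower property turns the
conditional drift into `a (t + 1) - a t` with `a t = E[L(Q(t))]`) gives the per-slot inequality
`a (t + 1) - a t + V E[p(t)] + ε ∑ₖ E|Qₖ(t)| ≤ B + V p*`. Summing over `t < M` telescopes the
drift, and `a M ≥ 0` since `L ≥ 0`. Dropping the nonnegative backlog term, or bounding the
penalty term below by `M p_min`, and dividing by `M` gives the finite-horizon bounds; their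
error terms `a 0 / (V M)` and `a 0 / (ε M)` vanish as `M → ∞`. -/

section TimeAverage

variable {x : ℕ → ℝ} {M : ℕ}

lemma sum_range_le_of_drift_le {a : ℕ → ℝ} {C : ℝ} (h : ∀ t, a (t + 1) - a t + x t ≤ C)
    (haM : 0 ≤ a M) : ∑ t ∈ Finset.range M, x t ≤ M * C + a 0 := by
  have hsum := Finset.sum_le_sum fun t (_ : t ∈ Finset.range M) => h t
  rw [Finset.sum_add_distrib, Finset.sum_range_sub, Finset.sum_const, Finset.card_range,
    nsmul_eq_mul] at hsum
  linarith

lemma mul_le_sum_range_of_forall_le {b : ℝ} (hb : ∀ t, b ≤ x t) :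
    M * b ≤ ∑ t ∈ Finset.range M, x t := by
  simpa using Finset.card_nsmul_le_sum (Finset.range M) x b fun t _ => hb t

lemma le_avg_of_forall_le {b : ℝ} (hM : 0 < M) (hb : ∀ t, b ≤ x t) :
    b ≤ (1 / (M : ℝ)) * ∑ t ∈ Finset.range M, x t := by
  rw [one_div, le_inv_mul_iff₀ (Nat.cast_pos.mpr hM)]
  exact mul_le_sum_range_of_forall_le hb

lemma avg_le_add_div_of_mul_sum_le {c D A : ℝ} (hM : 0 < M) (hc : 0 < c)
    (h : c * ∑ t ∈ Finset.range M, x t ≤ M * (c * D) + A) :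
    (1 / (M : ℝ)) * ∑ t ∈ Finset.range M, x t ≤ D + A / (c * M) := by
  have hcM : 0 < c * M := mul_pos hc (Nat.cast_pos.mpr hM)
  calc (1 / (M : ℝ)) * ∑ t ∈ Finset.range M, x t
        = (c * ∑ t ∈ Finset.range M, x t) / (c * M) := by field_simp
    _ ≤ (M * (c * D) + A) / (c * M) := by gcongr
    _ = D + A / (c * M) := by field_simp

lemma limsup_avg_le_of_avg_le_add_div {b c D A : ℝ} (hc : 0 < c) (hb : ∀ t, b ≤ x t)
    (h : ∀ M : ℕ, 0 < M → (1 / (M : ℝ)) * ∑ t ∈ Finset.range M, x t ≤ D + A / (c * M)) :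
    limsup (fun M : ℕ => (1 / (M : ℝ)) * ∑ t ∈ Finset.range M, x t) atTop ≤ D := by
  have hbound : Tendsto (fun M : ℕ => D + A / (c * M)) atTop (𝓝 D) := by
    simpa using tendsto_const_nhds.add (tendsto_const_nhds.div_atTop
      (tendsto_natCast_atTop_atTop.const_mul_atTop hc))
  have hlow : ∀ᶠ M : ℕ in atTop, b ≤ (1 / (M : ℝ)) * ∑ t ∈ Finset.range M, x t :=
    (eventually_gt_atTop 0).mono fun M hM => le_avg_of_forall_le hM hb
  calc limsup (fun M : ℕ => (1 / (M : ℝ)) * ∑ t ∈ Finset.range M, x t) atTop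
      ≤ limsup (fun M : ℕ => D + A / (c * M)) atTop :=
        limsup_le_limsup ((eventually_gt_atTop 0).mono h)
          (isCoboundedUnder_le_of_eventually_le _ hlow) hbound.isBoundedUnder_le
    _ = D := hbound.limsup_eq

end TimeAverage

lemma integral_add_mul_integral_le_of_condExp_le {Ω : Type*} {m m₀ : MeasurableSpace Ω}
    {μ : Measure Ω} [IsProbabilityMeasure μ] (hm : m ≤ m₀) {f g R : Ω → ℝ} {V c ε : ℝ}
    (hR : Integrable R μ) (h : ∀ᵐ ω ∂μ, μ[f | m] ω + V * μ[g | m] ω ≤ c - ε * R ω) :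
    ∫ ω, f ω ∂μ + V * ∫ ω, g ω ∂μ ≤ c - ε * ∫ ω, R ω ∂μ := by
  -- `f` and `g` need not be integrable: `∫ μ[f | m] = ∫ f` also holds when both are the junk `0`.
  have hint : ∫ ω, (μ[f | m] ω + V * μ[g | m] ω) ∂μ ≤ ∫ ω, (c - ε * R ω) ∂μ :=
    integral_mono_ae (integrable_condExp.add (integrable_condExp.const_mul V))
    ((integrable_const c).sub (hR.const_mul ε)) h
  rwa [integral_add integrable_condExp (integrable_condExp.const_mul V), integral_const_mul,
    integral_condExp hm, integral_condExp hm, integral_sub (integrable_const c)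
    (hR.const_mul ε), integral_const, integral_const_mul, probReal_univ, one_smul] at hint

section Lyapunov

variable {K : ℕ} {w : Fin K → ℝ}

lemma lyap_nonneg (hw : ∀ k, 0 ≤ w k) (q : Fin K → ℝ) : 0 ≤ lyap w q :=
  mul_nonneg one_half_pos.le (Finset.sum_nonneg fun k _ => mul_nonneg (hw k) (sq_nonneg _))

lemma mul_sq_le_two_mul_lyap (hw : ∀ k, 0 ≤ w k) (q : Fin K → ℝ) (k : Fin K) :
    w k * q k ^ 2 ≤ 2 * lyap w q := by
  have := Finset.single_le_sum (fun j _ => mul_nonneg (hw j) (sq_nonneg (q j)))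
    (Finset.mem_univ k)
  rw [lyap]
  linarith

lemma integrable_apply_of_integrable_lyap {Ω : Type*} [MeasurableSpace Ω] {μ : Measure Ω}
    [IsFiniteMeasure μ] {X : Ω → Fin K → ℝ} (hw : ∀ k, 0 < w k) (hX : Measurable X)
    (hL : Integrable (fun ω => lyap w (X ω)) μ) (k : Fin K) :
    Integrable (fun ω => X ω k) μ := by
  have hXk : AEStronglyMeasurable (fun ω => X ω k) μ :=
    ((measurable_pi_apply k).comp hX).aestronglyMeasurable
  have hsq : Integrable (fun ω => X ω k ^ 2) μ := by
    refine (hL.const_mul (2 / w k)).mono' (hXk.pow 2) (ae_of_all _ fun ω => ?_)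
    rw [Real.norm_of_nonneg (sq_nonneg _), div_mul_eq_mul_div, le_div_iff₀ (hw k)]
    linarith [mul_sq_le_two_mul_lyap (fun j => (hw j).le) (X ω) k]
  exact ((memLp_two_iff_integrable_sq hXk).mpr hsq).integrable one_le_two

end Lyapunov

lemma hist_le {Ω : Type*} [m₀ : MeasurableSpace Ω] {K : ℕ} {Q : ℕ → Ω → Fin K → ℝ}
    {p : ℕ → Ω → ℝ} (hQ : ∀ t, Measurable (Q t)) (hp : ∀ t, Measurable (p t)) (t : ℕ) :
    hist Q p t ≤ m₀ :=
  sup_le (iSup₂_le fun i _ => (hQ i).comap_le) (iSup₂_le fun i _ => (hp i).comap_le)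

theorem drift_plus_penalty_expectation_bounds_general
    {Ω : Type*} [MeasureSpace Ω] [IsProbabilityMeasure (ℙ : Measure Ω)]
    {K : ℕ} (w : Fin K → ℝ) (hw : ∀ k, 0 < w k)
    (Q : ℕ → Ω → Fin K → ℝ) (p : ℕ → Ω → ℝ)
    (hQm : ∀ t, Measurable (Q t)) (hpm : ∀ t, Measurable (p t))
    (hLint : ∀ t, Integrable (fun ω => lyap w (Q t ω)) ℙ)
    (B pstar V ε : ℝ) (hV : 0 < V) (hε : 0 < ε)
    (hdrift : ∀ t, ∀ᵐ ω ∂(ℙ : Measure Ω),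
      ((ℙ : Measure Ω)[fun ω' => lyap w (Q (t + 1) ω') - lyap w (Q t ω') | hist Q p t]) ω
          + V * ((ℙ : Measure Ω)[p t | hist Q p t]) ω
        ≤ B + V * pstar - ε * ∑ k, |Q t ω k|)
    (pmin : ℝ) (hpmin : ∀ t, pmin ≤ ∫ ω, p t ω ∂(ℙ : Measure Ω)) :
    (Filter.limsup (fun M : ℕ =>
        (1 / (M : ℝ)) * ∑ t ∈ Finset.range M, ∫ ω, p t ω ∂(ℙ : Measure Ω)) atTop
      ≤ pstar + B / V) ∧
    (Filter.limsup (fun M : ℕ =>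
        (1 / (M : ℝ)) * ∑ t ∈ Finset.range M, ∑ k, ∫ ω, |Q t ω k| ∂(ℙ : Measure Ω)) atTop
      ≤ (B + V * (pstar - pmin)) / ε) ∧
    (∀ M : ℕ, 0 < M →
      (1 / (M : ℝ)) * ∑ t ∈ Finset.range M, ∫ ω, p t ω ∂(ℙ : Measure Ω)
        ≤ pstar + B / V + (∫ ω, lyap w (Q 0 ω) ∂(ℙ : Measure Ω)) / (V * M)) ∧
    (∀ M : ℕ, 0 < M →
      (1 / (M : ℝ)) * ∑ t ∈ Finset.range M, ∑ k, ∫ ω, |Q t ω k| ∂(ℙ : Measure Ω)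
        ≤ (B + V * (pstar - pmin)) / ε + (∫ ω, lyap w (Q 0 ω) ∂(ℙ : Measure Ω)) / (ε * M)) := by
  set a : ℕ → ℝ := fun t => ∫ ω, lyap w (Q t ω) ∂(ℙ : Measure Ω)
  set P : ℕ → ℝ := fun t => ∫ ω, p t ω ∂(ℙ : Measure Ω)
  set S : ℕ → ℝ := fun t => ∑ k, ∫ ω, |Q t ω k| ∂(ℙ : Measure Ω)
  have hQint (t : ℕ) (k : Fin K) : Integrable (fun ω => |Q t ω k|) ℙ :=
    (integrable_apply_of_integrable_lyap hw (hQm t) (hLint t) k).abs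
  have hS (t : ℕ) : 0 ≤ S t :=
    Finset.sum_nonneg fun k _ => integral_nonneg fun ω => abs_nonneg _
  have hstep (t : ℕ) : a (t + 1) - a t + (V * P t + ε * S t) ≤ B + V * pstar := by
    have h := integral_add_mul_integral_le_of_condExp_le (hist_le hQm hpm t)
      (integrable_finsetSum _ fun k _ => hQint t k) (hdrift t)
    rw [integral_sub (hLint _) (hLint _), integral_finsetSum _ fun k _ => hQint t k] at h
    linarith
  have htotal (M : ℕ) : V * ∑ t ∈ Finset.range M, P t + ε * ∑ t ∈ Finset.range M, S t
      ≤ M * (B + V * pstar) + a 0 := by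
    simpa only [Finset.sum_add_distrib, Finset.mul_sum] using
      sum_range_le_of_drift_le hstep (integral_nonneg fun ω => lyap_nonneg (fun k => (hw k).le) _)
  have hpenalty (M : ℕ) (hM : 0 < M) : (1 / (M : ℝ)) * ∑ t ∈ Finset.range M, P t
      ≤ pstar + B / V + a 0 / (V * M) := by
    refine avg_le_add_div_of_mul_sum_le hM hV ?_
    rw [mul_add, mul_div_cancel₀ _ hV.ne']
    have hSsum : 0 ≤ ∑ t ∈ Finset.range M, S t := Finset.sum_nonneg fun t _ => hS t
    linarith [htotal M, mul_nonneg hε.le hSsum]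
  have hbacklog (M : ℕ) (hM : 0 < M) : (1 / (M : ℝ)) * ∑ t ∈ Finset.range M, S t
      ≤ (B + V * (pstar - pmin)) / ε + a 0 / (ε * M) := by
    refine avg_le_add_div_of_mul_sum_le hM hε ?_
    rw [mul_div_cancel₀ _ hε.ne']
    have hPsum : M * pmin ≤ ∑ t ∈ Finset.range M, P t := mul_le_sum_range_of_forall_le hpmin
    linarith [htotal M, mul_le_mul_of_nonneg_left hPsum hV.le]
  exact ⟨limsup_avg_le_of_avg_le_add_div hV hpmin hpenalty,
    limsup_avg_le_of_avg_le_add_div hε hS hbacklog, hpenalty, hbacklog⟩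

/-- Drift-plus-penalty expectation bounds: if `E[L(Q(0))] < ∞`, the
drift-plus-penalty condition `Δ(H(t)) + V E[p(t)|H(t)] ≤ B + V p* - ε ∑ₖ |Qₖ(t)|` holds
for all `t` with `V > 0`, `ε > 0`, and `E[p(t)] ≥ p_min`, then the time-average expected
penalty is at most `p* + B/V` and the time-average expected total backlog is at most
`(B + V(p* - p_min))/ε` in the limsup, with the corresponding non-asymptotic bounds. -/
theorem drift_plus_penalty_expectation_bounds
    {Ω : Type*} [MeasureSpace Ω] [IsProbabilityMeasure (ℙ : Measure Ω)]
    {K : ℕ} (w : Fin K → ℝ) (hw : ∀ k, 0 < w k)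
    (Q : ℕ → Ω → Fin K → ℝ) (p : ℕ → Ω → ℝ)
    (hQm : ∀ t, Measurable (Q t)) (hpm : ∀ t, Measurable (p t))
    (hLint : ∀ t, Integrable (fun ω => lyap w (Q t ω)) ℙ)
    (hpint : ∀ t, Integrable (p t) ℙ)
    (B pstar V ε : ℝ) (hV : 0 < V) (hε : 0 < ε)
    (hdrift : ∀ t, ∀ᵐ ω ∂(ℙ : Measure Ω),
      ((ℙ : Measure Ω)[fun ω' => lyap w (Q (t + 1) ω') - lyap w (Q t ω') | hist Q p t]) ω
          + V * ((ℙ : Measure Ω)[p t | hist Q p t]) ω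
        ≤ B + V * pstar - ε * ∑ k, |Q t ω k|)
    (pmin : ℝ) (hpmin : ∀ t, pmin ≤ ∫ ω, p t ω ∂(ℙ : Measure Ω)) :
    (Filter.limsup (fun M : ℕ =>
        (1 / (M : ℝ)) * ∑ t ∈ Finset.range M, ∫ ω, p t ω ∂(ℙ : Measure Ω)) atTop
      ≤ pstar + B / V) ∧
    (Filter.limsup (fun M : ℕ =>
        (1 / (M : ℝ)) * ∑ t ∈ Finset.range M, ∑ k, ∫ ω, |Q t ω k| ∂(ℙ : Measure Ω)) atTop
      ≤ (B + V * (pstar - pmin)) / ε) ∧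
    (∀ M : ℕ, 0 < M →
      (1 / (M : ℝ)) * ∑ t ∈ Finset.range M, ∫ ω, p t ω ∂(ℙ : Measure Ω)
        ≤ pstar + B / V + (∫ ω, lyap w (Q 0 ω) ∂(ℙ : Measure Ω)) / (V * M)) ∧
    (∀ M : ℕ, 0 < M →
      (1 / (M : ℝ)) * ∑ t ∈ Finset.range M, ∑ k, ∫ ω, |Q t ω k| ∂(ℙ : Measure Ω)
        ≤ (B + V * (pstar - pmin)) / ε + (∫ ω, lyap w (Q 0 ω) ∂(ℙ : Measure Ω)) / (ε * M)) :=
  drift_plus_penalty_expectation_bounds_general w hw Q p hQm hpm hLint B pstar V ε hV hε hdrift pmin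
    hpmin
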